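/- Let A be a left brace of cardinality p^n for a prime p > 3 and a natural number n, and suppose A satisfies Property 1. Then for every natural number i, the sets ann(p^i) and p^i·A are ideals of A, and for all natural numbers j ≥ i, x ∈ p^i·A and y ∈ ann(p^j) one has x * y ∈ ann(p^{j−i}). -/

import Mathlib

/-- A left brace: `(A, +)` abelian group, `(A, ∘)` a group (with identity `cone`
and inverse `cinv`), satisfying `a ∘ (b + c) + a = a ∘ b + a ∘ c`. -/
class LeftBrace (A : Type*) extends AddCommGroup A where
  circ : A → A → A
  cone : A
  cinv : A → A
  circ_assoc : ∀ a b c : A, circ (circ a b) c = circ a (circ b c)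
  circ_cone : ∀ a : A, circ a cone = a
  cone_circ : ∀ a : A, circ cone a = a
  circ_cinv : ∀ a : A, circ a (cinv a) = cone
  cinv_circ : ∀ a : A, circ (cinv a) a = cone
  circ_add : ∀ a b c : A, circ a (b + c) + a = circ a b + circ a c

namespace LeftBrace

variable {A : Type*} [LeftBrace A]

/-- The brace operation `a * b = a ∘ b - a - b`. -/
def bstar (a b : A) : A := circ a b - a - b

/-- `ann (p^i) = {a : p^i • a = 0}`. -/
def ann (p i : ℕ) : Set A := {a : A | (p ^ i : ℕ) • a = 0}

/-- `p^i • A = {p^i • a : a ∈ A}`. -/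
def pA (p i : ℕ) : Set A := Set.range (fun a : A => (p ^ i : ℕ) • a)

/-- An ideal of a left brace: an additive subgroup closed under `*` on both sides. -/
def IsIdeal (I : Set A) : Prop :=
  (0 : A) ∈ I ∧ (∀ x ∈ I, ∀ y ∈ I, x + y ∈ I) ∧ (∀ x ∈ I, -x ∈ I) ∧
  (∀ a : A, ∀ x ∈ I, bstar a x ∈ I) ∧ (∀ a : A, ∀ x ∈ I, bstar x a ∈ I)

/-- `eIter a b m = e'_m(a,b)` for `m ≥ 1`, with `eIter a b 0 = b`;
so `e'_1(a,b) = a * b` and `e'_{m+1}(a,b) = a * e'_m(a,b)`. -/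
def eIter (a b : A) : ℕ → A
  | 0 => b
  | m + 1 => bstar a (eIter a b m)

/-- `circPow a j = a^{∘ j}`, the `j`-fold `∘`-product of `a` with itself. -/
def circPow (a : A) : ℕ → A
  | 0 => cone
  | j + 1 => circ a (circPow a j)

/-- Property 1 (with `c = ⌊(p-1)/4⌋`). -/
def Property1 (p : ℕ) (A : Type*) [LeftBrace A] : Prop :=
  (∀ a b : A, eIter a b ((p - 1) / 4) ∈ pA p 1) ∧
  (∀ i : ℕ, 1 ≤ i → ∀ a : A, ∀ b ∈ ann p i, eIter a b ((p - 1) / 4) ∈ ann p (i - 1))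

end LeftBrace

open LeftBrace

namespace LeftBrace

variable {A : Type*} [LeftBrace A]

lemma circ_zero (a : A) : circ a 0 = a := by
  have h := circ_add a 0 0
  rw [add_zero] at h
  exact (add_left_cancel h).symm

lemma cone_eq_zero : (cone : A) = 0 := by
  have h1 := circ_zero (cone : A)
  rw [cone_circ] at h1
  exact h1.symm

/-- the lambda map -/
def lam (a x : A) : A := circ a x - a

lemma lam_def (a x : A) : lam a x = circ a x - a := rfl

lemma circ_eq_add_lam (a x : A) : circ a x = a + lam a x := by simp [lam]

lemma lam_add (a x y : A) : lam a (x + y) = lam a x + lam a y := by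
  have h2 : circ a (x + y) = circ a x + circ a y - a := eq_sub_of_add_eq (circ_add a x y)
  simp only [lam, h2]
  abel

lemma lam_zero (a : A) : lam a 0 = 0 := by simp [lam, circ_zero]

/-- `lam a` as an additive homomorphism. -/
def LAM (a : A) : A →+ A := { toFun := lam a, map_zero' := lam_zero a, map_add' := lam_add a }

lemma lam_neg (a : A) (x : A) : lam a (-x) = - lam a x := (LAM a).map_neg x

lemma lam_nsmul (a : A) (k : ℕ) (x : A) : lam a (k • x) = k • lam a x := map_nsmul (LAM a) k x

lemma lam_sub (a x y : A) : lam a (x - y) = lam a x - lam a y := (LAM a).map_sub x y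

lemma lam_circ (a b x : A) : lam (circ a b) x = lam a (lam b x) := by
  rw [lam_def (circ a b), circ_assoc, lam_def b, lam_sub, lam_def a (circ b x), lam_def a b]
  abel

lemma lam_cone (x : A) : lam cone x = x := by
  rw [lam_def, cone_circ, cone_eq_zero, sub_zero]

lemma lam_cinv_lam (a x : A) : lam (cinv a) (lam a x) = x := by
  rw [← lam_circ, cinv_circ, lam_cone]

lemma lam_lam_cinv (a x : A) : lam a (lam (cinv a) x) = x := by
  rw [← lam_circ, circ_cinv, lam_cone]

lemma bstar_eq (a x : A) : bstar a x = lam a x - x := rfl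

lemma lam_eq_add_bstar (a x : A) : lam a x = x + bstar a x := by rw [bstar_eq]; abel

lemma bstar_add (a x y : A) : bstar a (x + y) = bstar a x + bstar a y := by
  simp [bstar_eq, lam_add]; abel

lemma bstar_zero (a : A) : bstar a 0 = 0 := by simp [bstar_eq, lam_zero]

/-- `bstar a` as an additive homomorphism. -/
def BST (a : A) : A →+ A := { toFun := bstar a, map_zero' := bstar_zero a, map_add' := bstar_add a }

lemma bstar_nsmul (a : A) (k : ℕ) (x : A) : bstar a (k • x) = k • bstar a x := map_nsmul (BST a) k x

lemma bstar_neg (a : A) (x : A) : bstar a (-x) = - bstar a x := (BST a).map_neg x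

lemma zero_bstar (y : A) : bstar 0 y = 0 := by
  have h : circ (0:A) y = y := by rw [← cone_eq_zero, cone_circ]
  rw [bstar, h]; abel

lemma bstar_circ (u v z : A) :
    bstar (circ u v) z = bstar u (bstar v z) + bstar u z + bstar v z := by
  simp only [bstar_eq, lam_circ, lam_add, lam_sub]
  abel

end LeftBrace
namespace LeftBrace

variable {A : Type*} [LeftBrace A]

/-- multiplication by `k` as an additive homomorphism -/
def SMU (k : ℕ) : A →+ A :=
  { toFun := fun x => k • x, map_zero' := smul_zero k, map_add' := fun x y => smul_add k x y }

/-- `ann p i` as an additive subgroup -/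
def ANN (p i : ℕ) : AddSubgroup A := (SMU (p ^ i)).ker

/-- `pA p i` as an additive subgroup -/
def PAS (p i : ℕ) : AddSubgroup A := (SMU (p ^ i)).range

lemma mem_ANN {p i : ℕ} {x : A} : x ∈ ANN p i ↔ (p ^ i : ℕ) • x = 0 := Iff.rfl

lemma mem_PAS {p i : ℕ} {x : A} : x ∈ PAS p i ↔ ∃ y : A, (p ^ i : ℕ) • y = x := Iff.rfl

lemma SMU_apply (k : ℕ) (x : A) : SMU k x = k • x := rfl

lemma ann_eq_ANN (p i : ℕ) : (ann p i : Set A) = ((ANN p i : AddSubgroup A) : Set A) := rfl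

lemma pA_eq_PAS (p i : ℕ) : (pA p i : Set A) = ((PAS p i : AddSubgroup A) : Set A) := rfl

lemma mem_ann_iff {p i : ℕ} {x : A} : x ∈ (ann p i : Set A) ↔ (p ^ i : ℕ) • x = 0 := Iff.rfl

lemma mem_pA_iff {p i : ℕ} {x : A} : x ∈ (pA p i : Set A) ↔ ∃ y : A, (p ^ i : ℕ) • y = x :=
  Iff.rfl

lemma ANN_zero_eq_bot (p : ℕ) : (ANN p 0 : AddSubgroup A) = ⊥ := by
  ext x; simp [mem_ANN]

lemma ANN_mono {p : ℕ} {i j : ℕ} (h : i ≤ j) : (ANN p i : AddSubgroup A) ≤ ANN p j := by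
  intro x hx
  rw [mem_ANN] at hx ⊢
  have : p ^ j = p ^ (j - i) * p ^ i := by rw [← pow_add]; congr 1; omega
  rw [this, mul_smul, hx, smul_zero]

lemma smul_mem_ANN {p i j : ℕ} {x : A} (hx : x ∈ ANN p (i + j)) :
    (p ^ i : ℕ) • x ∈ (ANN p j : AddSubgroup A) := by
  rw [mem_ANN] at hx ⊢
  rw [← mul_smul, ← pow_add]
  rw [add_comm j i]
  exact hx

lemma ANN_of_smul_mem {p i j : ℕ} {x : A} (h : (p ^ i : ℕ) • x ∈ (ANN p j : AddSubgroup A)) :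
    x ∈ ANN p (j + i) := by
  rw [mem_ANN] at h ⊢
  rw [pow_add, mul_smul]
  exact h

/-- `bstar` preserves `ANN` (in the second argument). -/
lemma bstar_mem_ANN {p i : ℕ} (a : A) {x : A} (hx : x ∈ ANN p i) :
    bstar a x ∈ (ANN p i : AddSubgroup A) := by
  rw [mem_ANN] at hx ⊢
  rw [← bstar_nsmul, hx, bstar_zero]

lemma lam_mem_ANN {p i : ℕ} (a : A) {x : A} (hx : x ∈ ANN p i) :
    lam a x ∈ (ANN p i : AddSubgroup A) := by
  rw [mem_ANN] at hx ⊢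
  rw [← lam_nsmul, hx, lam_zero]

lemma bstar_mem_PAS {p i : ℕ} (a : A) {x : A} (hx : x ∈ PAS p i) :
    bstar a x ∈ (PAS p i : AddSubgroup A) := by
  obtain ⟨y, hy⟩ := hx
  exact ⟨bstar a y, by rw [SMU_apply] at hy ⊢; rw [← hy, bstar_nsmul]⟩

lemma lam_mem_PAS {p i : ℕ} (a : A) {x : A} (hx : x ∈ PAS p i) :
    lam a x ∈ (PAS p i : AddSubgroup A) := by
  obtain ⟨y, hy⟩ := hx
  exact ⟨lam a y, by rw [SMU_apply] at hy ⊢; rw [← hy, lam_nsmul]⟩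

lemma mem_ANN_zero_iff {p : ℕ} {x : A} : x ∈ (ANN p 0 : AddSubgroup A) ↔ x = 0 := by
  simp [mem_ANN]

/- ## eIter lemmas -/

lemma eIter_succ (a y : A) (m : ℕ) : eIter a y (m + 1) = bstar a (eIter a y m) := rfl

lemma eIter_zero_arg (a : A) (m : ℕ) : eIter a (0 : A) m = 0 := by
  induction m with
  | zero => rfl
  | succ m ih => rw [eIter_succ, ih, bstar_zero]

lemma eIter_add_arg (a x y : A) (m : ℕ) :
    eIter a (x + y) m = eIter a x m + eIter a y m := by
  induction m with
  | zero => rfl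
  | succ m ih => rw [eIter_succ, ih, bstar_add]; rfl

lemma eIter_nsmul_arg (a : A) (k : ℕ) (x : A) (m : ℕ) :
    eIter a (k • x) m = k • eIter a x m := by
  induction m with
  | zero => rfl
  | succ m ih => rw [eIter_succ, ih, bstar_nsmul]; rfl

lemma eIter_neg_arg (a : A) (x : A) (m : ℕ) : eIter a (-x) m = - eIter a x m := by
  induction m with
  | zero => rfl
  | succ m ih => rw [eIter_succ, ih, bstar_neg]; rfl

lemma eIter_comp (a y : A) (q s : ℕ) : eIter a y (q + s) = eIter a (eIter a y s) q := by
  induction q with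
  | zero => simp [eIter]
  | succ q ih =>
      have : q + 1 + s = (q + s) + 1 := by omega
      rw [this, eIter_succ, ih, eIter_succ]

lemma eIter_mem_ANN {p i : ℕ} (a : A) {x : A} (hx : x ∈ ANN p i) (m : ℕ) :
    eIter a x m ∈ (ANN p i : AddSubgroup A) := by
  induction m with
  | zero => exact hx
  | succ m ih => exact bstar_mem_ANN a ih

lemma eIter_mem_PAS {p i : ℕ} (a : A) {x : A} (hx : x ∈ PAS p i) (m : ℕ) :
    eIter a x m ∈ (PAS p i : AddSubgroup A) := by
  induction m with
  | zero => exact hx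
  | succ m ih => exact bstar_mem_PAS a ih

/- ## binomial sums -/

open Finset in
lemma sum_pascal (m : ℕ) (g : ℕ → A) :
    ∑ k ∈ range (m + 1), (m + 1).choose (k + 1) • g k
      = g 0 + (∑ k ∈ range m, m.choose (k + 1) • g k)
        + ∑ k ∈ range m, m.choose (k + 1) • g (k + 1) := by
  have h1 : ∀ k, (m + 1).choose (k + 1) • g k = m.choose k • g k + m.choose (k + 1) • g k := by
    intro k
    rw [Nat.choose_succ_succ, add_nsmul]
  calc ∑ k ∈ range (m + 1), (m + 1).choose (k + 1) • g k
      = ∑ k ∈ range (m + 1), (m.choose k • g k + m.choose (k + 1) • g k) := by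
        exact Finset.sum_congr rfl (fun k _ => h1 k)
    _ = (∑ k ∈ range (m + 1), m.choose k • g k)
        + ∑ k ∈ range (m + 1), m.choose (k + 1) • g k := Finset.sum_add_distrib
    _ = g 0 + (∑ k ∈ range m, m.choose (k + 1) • g k)
        + ∑ k ∈ range m, m.choose (k + 1) • g (k + 1) := by
        rw [Finset.sum_range_succ' (fun k => m.choose k • g k) m]
        rw [Finset.sum_range_succ (fun k => m.choose (k + 1) • g k) m]
        rw [Nat.choose_succ_self, Nat.choose_zero_right, one_smul, zero_smul, add_zero]
        abel

lemma bstar_finsum (a : A) (s : Finset ℕ) (f : ℕ → A) :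
    bstar a (∑ k ∈ s, f k) = ∑ k ∈ s, bstar a (f k) := map_sum (BST a) f s

open Finset in
/-- Expansion of `b^{∘m} * z`. -/
lemma bstar_circPow (b z : A) (m : ℕ) :
    bstar (circPow b m) z = ∑ k ∈ range m, m.choose (k + 1) • eIter b z (k + 1) := by
  induction m with
  | zero =>
      simp only [range_zero, sum_empty]
      rw [circPow, bstar_eq, lam_cone, sub_self]
  | succ m ih =>
      rw [circPow, bstar_circ, ih]
      have hb : bstar b (∑ k ∈ range m, m.choose (k + 1) • eIter b z (k + 1))
          = ∑ k ∈ range m, m.choose (k + 1) • eIter b z (k + 2) := by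
        rw [bstar_finsum]
        exact Finset.sum_congr rfl (fun k _ => by rw [bstar_nsmul]; rfl)
      rw [hb, sum_pascal m (fun k => eIter b z (k + 1))]
      have : bstar b z = eIter b z (0 + 1) := rfl
      rw [this]
      abel

open Finset in
/-- Expansion of `b^{∘m}` itself. -/
lemma circPow_eq (b : A) (m : ℕ) :
    circPow b m = ∑ k ∈ range m, m.choose (k + 1) • eIter b b k := by
  induction m with
  | zero => simp [circPow, cone_eq_zero]
  | succ m ih =>
      rw [circPow, circ_eq_add_lam, lam_eq_add_bstar, ih, bstar_finsum,
        sum_pascal m (fun k => eIter b b k)]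
      have hc : ∀ k, bstar b (m.choose (k + 1) • eIter b b k)
          = m.choose (k + 1) • eIter b b (k + 1) := fun k => by rw [bstar_nsmul]; rfl
      rw [Finset.sum_congr rfl (fun k _ => hc k)]
      have h0 : (b : A) = eIter b b 0 := rfl
      nth_rewrite 1 [h0]
      abel

end LeftBrace
namespace LeftBrace

section Arith

variable {p : ℕ}

lemma four_c_le : 4 * ((p - 1) / 4) ≤ p - 1 := by
  have := Nat.div_mul_le_self (p - 1) 4
  omega

lemma five_le (hp : p.Prime) (hp3 : 3 < p) : 5 ≤ p := by
  have h4 : p ≠ 4 := by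
    intro h
    rw [h] at hp
    norm_num at hp
  omega

lemma one_le_c (hp3 : 3 < p) (hp : p.Prime) : 1 ≤ (p - 1) / 4 := by
  have h5 : 5 ≤ p := five_le hp hp3
  have h4 : 4 ≤ p - 1 := by omega
  exact Nat.one_le_div_iff (by norm_num) |>.mpr h4

lemma ar_pow (hp : p.Prime) (hp3 : 3 < p) :
    ∀ e, 1 ≤ e → (e + 1) * ((p - 1) / 4) + 1 ≤ p ^ e := by
  have hc4 : 4 * ((p - 1) / 4) ≤ p - 1 := four_c_le
  have hp2 : 2 ≤ p := hp.two_le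
  intro e he
  induction e with
  | zero => omega
  | succ e ih =>
      rcases Nat.eq_or_lt_of_le he with h1 | h1
      · -- e + 1 = 1
        have : e = 0 := by omega
        subst this
        have hpow : p ^ (0 + 1) = p := by norm_num
        omega
      · have he1 : 1 ≤ e := by omega
        have ih' := ih he1
        have hpe : p ≤ p ^ e := Nat.le_self_pow (by omega) p
        have hmul : p ^ (e + 1) = p * p ^ e := by rw [pow_succ, Nat.mul_comm]
        have h2 : 2 * p ^ e ≤ p * p ^ e := Nat.mul_le_mul_right _ (by omega)
        have hstep : (e + 1 + 1) * ((p - 1) / 4) = (e + 1) * ((p - 1) / 4) + (p - 1) / 4 := by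
          ring
        omega

lemma kd (hp : p.Prime) {i j : ℕ} (hj1 : 1 ≤ j) (hj2 : j ≤ p ^ i) :
    j.factorization p ≤ i ∧ p ^ j.factorization p ≤ j ∧
      ∃ M : ℕ, (p ^ i).choose j = p ^ (i - j.factorization p) * M := by
  set e := j.factorization p with he
  have hj0 : j ≠ 0 := by omega
  have hpe_dvd : p ^ e ∣ j := Nat.ordProj_dvd j p
  have hpe_le : p ^ e ≤ j := Nat.le_of_dvd (by omega) hpe_dvd
  have hei : e ≤ i := by
    have : p ^ e ≤ p ^ i := le_trans hpe_le hj2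
    exact (Nat.pow_le_pow_iff_right hp.one_lt).mp this
  refine ⟨hei, hpe_le, ?_⟩
  -- key identity
  have hid : p ^ i * (p ^ i - 1).choose (j - 1) = (p ^ i).choose j * j := by
    have hpi : 1 ≤ p ^ i := Nat.one_le_pow _ _ hp.pos
    have := Nat.add_one_mul_choose_eq (p ^ i - 1) (j - 1)
    rw [show p ^ i - 1 + 1 = p ^ i by omega, show j - 1 + 1 = j by omega] at this
    exact this
  have hdvd : p ^ i ∣ (p ^ i).choose j * j := ⟨_, hid.symm⟩
  set q := ordCompl[p] j with hq
  have hjq : p ^ e * q = j := Nat.ordProj_mul_ordCompl_eq_self j p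
  have hqnd : ¬ p ∣ q := Nat.not_dvd_ordCompl hp hj0
  have hsplit : p ^ (i - e) * p ^ e = p ^ i := by
    rw [← pow_add]; congr 1; omega
  have hdvd2 : p ^ (i - e) * p ^ e ∣ ((p ^ i).choose j * q) * p ^ e := by
    rw [hsplit]
    have : (p ^ i).choose j * q * p ^ e = (p ^ i).choose j * j := by
      rw [mul_assoc, mul_comm q (p ^ e), hjq]
    rw [this]; exact hdvd
  have hpe_pos : 0 < p ^ e := Nat.pow_pos hp.pos
  have hdvd3 : p ^ (i - e) ∣ (p ^ i).choose j * q :=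
    (Nat.mul_dvd_mul_iff_right hpe_pos).mp hdvd2
  have hcop : Nat.Coprime (p ^ (i - e)) q :=
    Nat.Coprime.pow_left _ ((Nat.Prime.coprime_iff_not_dvd hp).mpr hqnd)
  exact hcop.dvd_of_dvd_mul_right hdvd3

lemma one_le_factorization (hp : p.Prime) {j : ℕ} (hj0 : j ≠ 0) (hdvd : p ∣ j) :
    1 ≤ j.factorization p :=
  (Nat.Prime.dvd_iff_one_le_factorization hp hj0).mp hdvd

lemma factorization_zero_of_not_dvd (hp : p.Prime) {j : ℕ} (hnd : ¬ p ∣ j) :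
    j.factorization p = 0 := by
  by_contra h
  exact hnd (Nat.dvd_of_factorization_pos h)

end Arith

section PBrace

variable {A : Type*} [LeftBrace A] {p : ℕ}

/-- iterating Property 1 (ii) -/
lemma iter_ann (hP1 : Property1 p A) :
    ∀ (e : ℕ) {t q : ℕ}, e * ((p - 1) / 4) ≤ q → ∀ (a : A) {x : A}, x ∈ ANN p t →
      eIter a x q ∈ (ANN p (t - e) : AddSubgroup A) := by
  intro e
  induction e with
  | zero =>
      intro t q _ a x hx
      have h := eIter_mem_ANN a hx q
      have ht : t - 0 = t := Nat.sub_zero t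
      rw [ht]
      exact h
  | succ e ih =>
      intro t q hq a x hx
      have h2 : (e + 1) * ((p - 1) / 4) = e * ((p - 1) / 4) + (p - 1) / 4 := by ring
      have hcle : (p - 1) / 4 ≤ q := by omega
      have hsplit : q = (q - (p - 1) / 4) + (p - 1) / 4 := by omega
      rw [hsplit, eIter_comp]
      have hmid : eIter a x ((p - 1) / 4) ∈ (ANN p (t - 1) : AddSubgroup A) := by
        rcases Nat.eq_zero_or_pos t with ht | ht
        · subst ht
          have hx0 : x = 0 := mem_ANN_zero_iff.mp hx
          subst hx0
          rw [eIter_zero_arg]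
          exact AddSubgroup.zero_mem _
        · exact hP1.2 t ht a x hx
      have := ih (t := t - 1) (q := q - (p - 1) / 4) (by omega) a hmid
      have heq : t - 1 - e = t - (e + 1) := by omega
      rwa [heq] at this

/-- iterating Property 1 (i): division by powers of p -/
lemma div_pow (hP1 : Property1 p A) :
    ∀ (e : ℕ) {q : ℕ}, e * ((p - 1) / 4) ≤ q → ∀ (b y : A),
      ∃ ρ : A, eIter b y q = (p ^ e : ℕ) • ρ := by
  intro e
  induction e with
  | zero => intro q _ b y; exact ⟨eIter b y q, by simp⟩
  | succ e ih =>
      intro q hq b y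
      have h2 : (e + 1) * ((p - 1) / 4) = e * ((p - 1) / 4) + (p - 1) / 4 := by ring
      have hcle : (p - 1) / 4 ≤ q := by omega
      have hsplit : q = (q - (p - 1) / 4) + (p - 1) / 4 := by omega
      obtain ⟨θ, hθ⟩ := hP1.1 b y
      rw [pow_one] at hθ
      obtain ⟨ρ, hρ⟩ := ih (q := q - (p - 1) / 4) (by omega) b θ
      refine ⟨ρ, ?_⟩
      rw [hsplit, eIter_comp, ← hθ, eIter_nsmul_arg, hρ, ← mul_nsmul]
      congr 1

end PBrace

end LeftBrace
namespace LeftBrace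

section QQ

variable {A : Type*} [LeftBrace A] {p : ℕ}

open Finset in
lemma circPow_eq_zero (hp : p.Prime) (hp3 : 3 < p) (hP1 : Property1 p A)
    {i : ℕ} {x : A} (hx : x ∈ ANN p i) : circPow x (p ^ i) = 0 := by
  rw [circPow_eq]
  apply Finset.sum_eq_zero
  intro k hk
  rw [Finset.mem_range] at hk
  have hj1 : 1 ≤ k + 1 := by omega
  have hj2 : k + 1 ≤ p ^ i := by omega
  obtain ⟨hei, hpej, M, hM⟩ := kd hp hj1 hj2
  set e := (k + 1).factorization p with he
  rcases Nat.eq_zero_or_pos e with he0 | he1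
  · rw [hM, he0, Nat.sub_zero, mul_nsmul]
    have hv : eIter x x k ∈ ANN p i := eIter_mem_ANN x hx k
    rw [mem_ANN] at hv
    rw [hv, smul_zero]
  · have har : (e + 1) * ((p - 1) / 4) + 1 ≤ p ^ e := ar_pow hp hp3 e he1
    have hec : e * ((p - 1) / 4) ≤ k := by
      have h3 : e * ((p - 1) / 4) ≤ (e + 1) * ((p - 1) / 4) :=
        Nat.mul_le_mul_right _ (by omega)
      omega
    have hv : eIter x x k ∈ ANN p (i - e) := iter_ann hP1 e hec x hx
    rw [mem_ANN] at hv
    rw [hM, mul_nsmul, hv, smul_zero]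

open Finset in
lemma qq_aux (hp : p.Prime) (hp3 : 3 < p) (hP1 : Property1 p A)
    {n : ℕ} (hn : ∀ a : A, a ∈ ANN p n)
    {i : ℕ} {x : A} (hx : x ∈ ANN p i) :
    ∀ d k a, 1 ≤ k → ((p - 1) / 4) * n + 1 ≤ k + d → (p ^ i : ℕ) • eIter x a k = 0 := by
  have hbigcase : ∀ k a, ((p - 1) / 4) * n + 1 ≤ k → (p ^ i : ℕ) • eIter x a k = 0 := by
    intro k a hk
    have hnc : n * ((p - 1) / 4) ≤ k := by
      have : n * ((p - 1) / 4) = ((p - 1) / 4) * n := Nat.mul_comm _ _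
      omega
    have hv : eIter x a k ∈ ANN p (n - n) := iter_ann hP1 n hnc x (hn a)
    rw [Nat.sub_self] at hv
    rw [mem_ANN_zero_iff.mp hv, smul_zero]
  intro d
  induction d with
  | zero =>
      intro k a hk1 hk2
      exact hbigcase k a (by omega)
  | succ d ih =>
      intro k a hk1 hk2
      by_cases hbig : ((p - 1) / 4) * n + 1 ≤ k
      · exact hbigcase k a hbig
      -- main case : use the expansion of bstar (circPow x (p^i)) w
      set m := p ^ i with hm
      have hm1 : 1 ≤ m := Nat.one_le_pow _ _ hp.pos
      set w := eIter x a (k - 1) with hw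
      have hexp : (0 : A) = ∑ j ∈ range m, m.choose (j + 1) • eIter x w (j + 1) := by
        rw [← bstar_circPow x w m, circPow_eq_zero hp hp3 hP1 hx, zero_bstar]
      have hcomp : ∀ j : ℕ, eIter x w (j + 1) = eIter x a (j + k) := by
        intro j
        rw [hw, ← eIter_comp]
        congr 1
        omega
      have hpeel : ∑ j ∈ range m, m.choose (j + 1) • eIter x w (j + 1)
          = (∑ j ∈ range (m - 1), m.choose (j + 2) • eIter x w (j + 2))
            + m.choose 1 • eIter x w 1 := by
        have hm' : m = (m - 1) + 1 := by omega
        rw [hm']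
        rw [Finset.sum_range_succ' (fun j => ((m-1)+1).choose (j + 1) • eIter x w (j + 1)) (m-1)]
        rw [← hm']
      have hrest : ∀ j ∈ range (m - 1), m.choose (j + 2) • eIter x w (j + 2) = 0 := by
        intro j hj
        rw [Finset.mem_range] at hj
        rw [hcomp (j + 1)]
        have hj1 : 1 ≤ j + 2 := by omega
        have hj2 : j + 2 ≤ p ^ i := by omega
        obtain ⟨hei, hpej, M, hM⟩ := kd hp hj1 hj2
        set e := (j + 2).factorization p with he
        rcases Nat.eq_zero_or_pos e with he0 | he1
        · rw [hM, he0, Nat.sub_zero, mul_nsmul]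
          rw [ih (j + 1 + k) a (by omega) (by omega), smul_zero]
        · have har : (e + 1) * ((p - 1) / 4) + 1 ≤ p ^ e := ar_pow hp hp3 e he1
          have hc1 : 1 ≤ (p - 1) / 4 := one_le_c hp3 hp
          have hje : e * ((p - 1) / 4) + 1 ≤ j + 1 := by
            have h3 : e * ((p - 1) / 4) + ((p - 1) / 4) = (e + 1) * ((p - 1) / 4) := by ring
            omega
          have hcompe : eIter x a (j + 1 + k)
              = eIter x (eIter x a (j + 1 + k - e * ((p - 1) / 4))) (e * ((p - 1) / 4)) := by
            rw [← eIter_comp]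
            congr 1
            omega
          have hinner : eIter x a (j + 1 + k - e * ((p - 1) / 4)) ∈ ANN p i := by
            rw [mem_ANN]
            exact ih _ a (by omega) (by omega)
          have hv : eIter x (eIter x a (j + 1 + k - e * ((p - 1) / 4))) (e * ((p - 1) / 4))
              ∈ ANN p (i - e) := iter_ann hP1 e (le_refl _) x hinner
          rw [mem_ANN] at hv
          rw [hM, mul_nsmul, hcompe, hv, smul_zero]
      have hsum0 : ∑ j ∈ range (m - 1), m.choose (j + 2) • eIter x w (j + 2) = 0 :=
        Finset.sum_eq_zero hrest
      have hone1 : eIter x w 1 = eIter x a k := by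
        rw [hw, ← eIter_comp]
        congr 1
        omega
      have hone : m.choose 1 • eIter x w 1 = (p ^ i : ℕ) • eIter x a k := by
        rw [Nat.choose_one_right, hone1, hm]
      rw [hpeel, hsum0, hone, zero_add] at hexp
      exact hexp.symm

/-- `ann p i` is closed under `bstar` on the right. -/
lemma qq (hp : p.Prime) (hp3 : 3 < p) (hP1 : Property1 p A)
    {n : ℕ} (hn : ∀ a : A, a ∈ ANN p n)
    {i : ℕ} {x : A} (hx : x ∈ ANN p i) (a : A) :
    bstar x a ∈ (ANN p i : AddSubgroup A) := by
  rw [mem_ANN]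
  have := qq_aux hp hp3 hP1 hn hx (((p - 1) / 4) * n) 1 a (le_refl _) (by omega)
  exact this

end QQ

end LeftBrace
namespace LeftBrace

variable {A : Type*} [LeftBrace A]

/-- The socle series of the left brace. -/
def FF : ℕ → AddSubgroup A
  | 0 => ⊥
  | s + 1 =>
    { carrier := {x | ∀ a : A, bstar a x ∈ FF s}
      zero_mem' := fun a => by rw [bstar_zero]; exact (FF s).zero_mem
      add_mem' := fun hx hy a => by rw [bstar_add]; exact (FF s).add_mem (hx a) (hy a)
      neg_mem' := fun hx a => by rw [bstar_neg]; exact (FF s).neg_mem (hx a) }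

lemma mem_FF_succ {s : ℕ} {x : A} : x ∈ FF (s + 1) ↔ ∀ a : A, bstar a x ∈ FF s := Iff.rfl

lemma FF_le_succ : ∀ s, (FF s : AddSubgroup A) ≤ FF (s + 1)
  | 0 => bot_le
  | s + 1 => fun x hx => mem_FF_succ.mpr (fun a => FF_le_succ s (hx a))

lemma bstar_mem_FF {s : ℕ} (a : A) {x : A} (hx : x ∈ FF s) : bstar a x ∈ FF s := by
  cases s with
  | zero =>
      rw [FF, AddSubgroup.mem_bot] at hx
      subst hx
      rw [bstar_zero]
      exact (FF 0).zero_mem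
  | succ s => exact FF_le_succ s (hx a)

lemma lam_mem_FF {s : ℕ} (g : A) {x : A} (hx : x ∈ FF s) : lam g x ∈ FF s := by
  rw [lam_eq_add_bstar]
  exact (FF s).add_mem hx (bstar_mem_FF g hx)

lemma eIter_mem_FF {s q : ℕ} (hq : 1 ≤ q) (a : A) {x : A} (hx : x ∈ FF (s + 1)) :
    eIter a x q ∈ (FF s : AddSubgroup A) := by
  induction q with
  | zero => omega
  | succ q ih =>
      rcases Nat.eq_zero_or_pos q with h | h
      · subst h
        exact hx a
      · exact bstar_mem_FF a (ih h)

/-- The multiplicative group `(A, ∘)` as a type synonym. -/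
def Circ (A : Type*) := A

/-- identity map into the synonym -/
def toCirc : A → Circ A := fun a => a

/-- identity map out of the synonym -/
def ofCirc : Circ A → A := fun a => a

instance : Group (Circ A) where
  mul := fun a b => toCirc (circ (ofCirc a) (ofCirc b))
  one := toCirc (cone : A)
  inv := fun a => toCirc (cinv (ofCirc a))
  mul_assoc := fun a b c => congrArg toCirc (circ_assoc (ofCirc a) (ofCirc b) (ofCirc c))
  one_mul := fun a => congrArg toCirc (cone_circ (ofCirc a))
  mul_one := fun a => congrArg toCirc (circ_cone (ofCirc a))
  inv_mul_cancel := fun a => congrArg toCirc (cinv_circ (ofCirc a))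

lemma FF_grow (p n : ℕ) (hp : p.Prime) [Fintype A] (hcard : Fintype.card A = p ^ n)
    {s : ℕ} (hs : FF (A := A) s ≠ ⊤) : ∃ x : A, x ∉ FF s ∧ x ∈ FF (s + 1) := by
  classical
  set H := FF (A := A) s with hH
  have hpg : IsPGroup p (Circ A) := by
    apply IsPGroup.of_card (n := n)
    have he : Circ A = A := rfl
    rw [show Nat.card (Circ A) = Nat.card A from congrArg Nat.card he,
      Nat.card_eq_fintype_card, hcard]
  haveI : Fact p.Prime := ⟨hp⟩
  letI : MulAction (Circ A) (A ⧸ H) :=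
    { smul := fun g q => QuotientAddGroup.map H H (LAM (ofCirc g))
        (fun x hx => AddSubgroup.mem_comap.mpr (lam_mem_FF _ hx)) q
      one_smul := fun q => by
        refine QuotientAddGroup.induction_on q (fun x => ?_)
        show QuotientAddGroup.map H H (LAM (ofCirc (1 : Circ A))) _ (QuotientAddGroup.mk x)
          = QuotientAddGroup.mk x
        rw [QuotientAddGroup.map_mk]
        show QuotientAddGroup.mk (lam cone x) = QuotientAddGroup.mk x
        rw [lam_cone]
      mul_smul := fun g h q => by
        refine QuotientAddGroup.induction_on q (fun x => ?_)
        show QuotientAddGroup.map H H (LAM (ofCirc (g * h : Circ A))) _ (QuotientAddGroup.mk x)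
          = QuotientAddGroup.map H H (LAM (ofCirc g)) _
              (QuotientAddGroup.map H H (LAM (ofCirc h)) _ (QuotientAddGroup.mk x))
        rw [QuotientAddGroup.map_mk, QuotientAddGroup.map_mk, QuotientAddGroup.map_mk]
        show QuotientAddGroup.mk (lam (circ (ofCirc g) (ofCirc h)) x)
          = QuotientAddGroup.mk (lam (ofCirc g) (lam (ofCirc h) x))
        rw [lam_circ] }
  have hsmul_mk : ∀ (g : A) (x : A),
      (toCirc g) • (QuotientAddGroup.mk x : A ⧸ H) = QuotientAddGroup.mk (lam g x) := by
    intro g x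
    show QuotientAddGroup.map H H (LAM g) _ (QuotientAddGroup.mk x) = QuotientAddGroup.mk (lam g x)
    show QuotientAddGroup.mk (LAM g x) = QuotientAddGroup.mk (lam g x)
    rfl
  have hQdvd : Nat.card (A ⧸ H) ∣ p ^ n := by
    have h1 := AddSubgroup.card_eq_card_quotient_mul_card_addSubgroup H
    rw [Nat.card_eq_fintype_card, hcard] at h1
    exact ⟨Nat.card H, h1⟩
  have hQne : Nat.card (A ⧸ H) ≠ 1 := by
    intro h1
    apply hs
    rw [eq_top_iff]
    intro x _
    have hsing : Subsingleton (A ⧸ H) := (Nat.card_eq_one_iff_unique.mp h1).1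
    have h2 : (QuotientAddGroup.mk x : A ⧸ H) = QuotientAddGroup.mk 0 := Subsingleton.elim _ _
    have h3 : (QuotientAddGroup.mk (0:A) : A ⧸ H) = 0 := rfl
    rw [h3] at h2
    exact (QuotientAddGroup.eq_zero_iff x).mp h2
  have hpQ : p ∣ Nat.card (A ⧸ H) := by
    obtain ⟨a, _, ha2⟩ := (Nat.dvd_prime_pow hp).mp hQdvd
    rcases Nat.eq_zero_or_pos a with h0 | h1
    · exact absurd (by rw [ha2, h0, pow_zero]) hQne
    · rw [ha2]
      exact dvd_pow_self p (by omega)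
  have hmod := hpg.card_modEq_card_fixedPoints (A ⧸ H)
  have hpfix : p ∣ Nat.card (MulAction.fixedPoints (Circ A) (A ⧸ H)) :=
    Nat.modEq_zero_iff_dvd.mp ((hmod.symm).trans (Nat.modEq_zero_iff_dvd.mpr hpQ))
  have h0fix : (0 : A ⧸ H) ∈ MulAction.fixedPoints (Circ A) (A ⧸ H) := by
    intro g
    have h0 : (0 : A ⧸ H) = QuotientAddGroup.mk 0 := rfl
    rw [h0]
    show (toCirc (ofCirc g)) • (QuotientAddGroup.mk (0:A) : A ⧸ H) = QuotientAddGroup.mk (0:A)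
    rw [hsmul_mk (ofCirc g) 0, lam_zero]
  have hfix_pos : 0 < Nat.card (MulAction.fixedPoints (Circ A) (A ⧸ H)) := by
    have : Nonempty (MulAction.fixedPoints (Circ A) (A ⧸ H)) := ⟨⟨0, h0fix⟩⟩
    exact Nat.card_pos
  have hone_lt : 1 < Nat.card (MulAction.fixedPoints (Circ A) (A ⧸ H)) := by
    have hp2 := hp.two_le
    have := Nat.le_of_dvd hfix_pos hpfix
    omega
  letI : Fintype (MulAction.fixedPoints (Circ A) (A ⧸ H)) := Fintype.ofFinite _
  rw [Nat.card_eq_fintype_card] at hone_lt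
  obtain ⟨⟨q, hq⟩, hne⟩ := Fintype.exists_ne_of_one_lt_card hone_lt ⟨0, h0fix⟩
  have hqne : q ≠ 0 := by
    intro h
    apply hne
    exact Subtype.ext h
  obtain ⟨x, hx⟩ := QuotientAddGroup.mk_surjective q
  refine ⟨x, ?_, ?_⟩
  · intro hxH
    exact hqne (hx ▸ (QuotientAddGroup.eq_zero_iff x).mpr hxH)
  · rw [mem_FF_succ]
    intro a
    have hfix := hq (toCirc a)
    rw [← hx, hsmul_mk a x] at hfix
    have hsub : lam a x - x ∈ H := QuotientAddGroup.eq_iff_sub_mem.mp hfix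
    rwa [bstar_eq]

lemma FF_top (p n : ℕ) (hp : p.Prime) [Fintype A] (hcard : Fintype.card A = p ^ n) :
    FF (A := A) n = ⊤ := by
  classical
  have key : ∀ s, FF (A := A) s = ⊤ ∨ p ^ s ≤ Nat.card (FF (A := A) s) := by
    intro s
    induction s with
    | zero =>
        right
        rw [FF, AddSubgroup.card_bot, pow_zero]
    | succ s ih =>
        by_cases htop : FF (A := A) s = ⊤
        · left
          rw [eq_top_iff, ← htop]
          exact FF_le_succ s
        · have hcs : p ^ s ≤ Nat.card (FF (A := A) s) := by
            rcases ih with h | h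
            · exact absurd h htop
            · exact h
          obtain ⟨x, hx1, hx2⟩ := FF_grow p n hp hcard htop
          right
          letI : Fintype (FF (A := A) s) := Fintype.ofFinite _
          letI : Fintype (FF (A := A) (s + 1)) := Fintype.ofFinite _
          have hlt : Fintype.card (FF (A := A) s) < Fintype.card (FF (A := A) (s + 1)) := by
            apply Fintype.card_lt_of_injective_of_notMem
              (f := fun y => (⟨y.1, FF_le_succ s y.2⟩ : FF (A := A) (s + 1)))
              (b := ⟨x, hx2⟩)
            · intro y z h
              exact Subtype.ext (Subtype.mk_eq_mk.mp h)
            · rintro ⟨y, hy⟩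
              apply hx1
              have h3 : y.1 = x := Subtype.mk_eq_mk.mp hy
              rw [← h3]
              exact y.2
          have hdvd : Nat.card (FF (A := A) (s + 1)) ∣ p ^ n := by
            have h1 := AddSubgroup.card_eq_card_quotient_mul_card_addSubgroup
              (FF (A := A) (s + 1))
            rw [Nat.card_eq_fintype_card (α := A), hcard] at h1
            exact Dvd.intro_left _ h1.symm
          obtain ⟨a, _, ha2⟩ := (Nat.dvd_prime_pow hp).mp hdvd
          have hsa : p ^ s < p ^ a := by
            calc p ^ s ≤ Nat.card (FF (A := A) s) := hcs
              _ = Fintype.card (FF (A := A) s) := Nat.card_eq_fintype_card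
              _ < Fintype.card (FF (A := A) (s + 1)) := hlt
              _ = Nat.card (FF (A := A) (s + 1)) := Nat.card_eq_fintype_card.symm
              _ = p ^ a := ha2
          have hlt2 : s < a := (Nat.pow_lt_pow_iff_right hp.one_lt).mp hsa
          rw [ha2]
          exact Nat.pow_le_pow_right hp.pos hlt2
  rcases key n with h | h
  · exact h
  · apply AddSubgroup.eq_top_of_le_card
    rw [Nat.card_eq_fintype_card, hcard]
    exact h

end LeftBrace
namespace LeftBrace

section Main

variable {A : Type*} [LeftBrace A] {p : ℕ}

open Finset

lemma gstar_zero (hp : p.Prime) (hp3 : 3 < p) (hP1 : Property1 p A)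
    {i : ℕ} (b : A) {z : A} (hz : z ∈ ANN p i) :
    bstar (circPow b (p ^ i)) z = 0 := by
  rw [bstar_circPow]
  apply Finset.sum_eq_zero
  intro k hk
  rw [Finset.mem_range] at hk
  have hj1 : 1 ≤ k + 1 := by omega
  have hj2 : k + 1 ≤ p ^ i := by omega
  obtain ⟨hei, hpej, M, hM⟩ := kd hp hj1 hj2
  set e := (k + 1).factorization p with he
  rcases Nat.eq_zero_or_pos e with he0 | he1
  · rw [hM, he0, Nat.sub_zero, mul_nsmul]
    have hv : eIter b z (k + 1) ∈ ANN p i := eIter_mem_ANN b hz (k + 1)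
    rw [mem_ANN] at hv
    rw [hv, smul_zero]
  · have har : (e + 1) * ((p - 1) / 4) + 1 ≤ p ^ e := ar_pow hp hp3 e he1
    have hec : e * ((p - 1) / 4) ≤ k + 1 := by
      have h3 : e * ((p - 1) / 4) ≤ (e + 1) * ((p - 1) / 4) :=
        Nat.mul_le_mul_right _ (by omega)
      omega
    have hv : eIter b z (k + 1) ∈ ANN p (i - e) := iter_ann hP1 e hec b hz
    rw [mem_ANN] at hv
    rw [hM, mul_nsmul, hv, smul_zero]

lemma gstar_mem (hp : p.Prime) (hp3 : 3 < p) (hP1 : Property1 p A)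
    {i : ℕ} (b y : A) :
    bstar (circPow b (p ^ i)) y ∈ (PAS p i : AddSubgroup A) := by
  rw [bstar_circPow]
  apply AddSubgroup.sum_mem
  intro k hk
  rw [Finset.mem_range] at hk
  have hj1 : 1 ≤ k + 1 := by omega
  have hj2 : k + 1 ≤ p ^ i := by omega
  obtain ⟨hei, hpej, M, hM⟩ := kd hp hj1 hj2
  set e := (k + 1).factorization p with he
  rcases Nat.eq_zero_or_pos e with he0 | he1
  · rw [hM, he0, Nat.sub_zero, mul_nsmul']
    exact ⟨M • eIter b y (k + 1), rfl⟩
  · have har : (e + 1) * ((p - 1) / 4) + 1 ≤ p ^ e := ar_pow hp hp3 e he1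
    have hec : e * ((p - 1) / 4) ≤ k + 1 := by
      have h3 : e * ((p - 1) / 4) ≤ (e + 1) * ((p - 1) / 4) :=
        Nat.mul_le_mul_right _ (by omega)
      omega
    obtain ⟨ρ, hρ⟩ := div_pow hP1 e hec b y
    have hpe : p ^ e * p ^ (i - e) = p ^ i := by
      rw [← pow_add]; congr 1; omega
    have hcoef : p ^ (i - e) * M * p ^ e = p ^ i * M := by
      calc p ^ (i - e) * M * p ^ e = p ^ e * p ^ (i - e) * M := by ring
        _ = p ^ i * M := by rw [hpe]
    have hterm : (p ^ i).choose (k + 1) • eIter b y (k + 1) = (p ^ i : ℕ) • (M • ρ) := by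
      calc (p ^ i).choose (k + 1) • eIter b y (k + 1)
          = (p ^ (i - e) * M) • ((p ^ e : ℕ) • ρ) := by rw [hM, hρ]
        _ = (p ^ (i - e) * M * p ^ e) • ρ := smul_smul _ _ _
        _ = (p ^ i * M) • ρ := by rw [hcoef]
        _ = (p ^ i : ℕ) • (M • ρ) := (smul_smul _ _ _).symm
    rw [hterm]
    exact ⟨M • ρ, rfl⟩

/-- the key decomposition of `p^i • b` as a circle product -/
lemma decomp (hp : p.Prime) (hp3 : 3 < p) (hP1 : Property1 p A)
    {i t s : ℕ} (hi : 1 ≤ i) {b : A} (hb1 : b ∈ ANN p (t + 1)) (hb2 : b ∈ FF (s + 1)) :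
    ∃ r₁ r₂ : A, r₁ ∈ ANN p (t + 1) ∧ r₁ ∈ FF s ∧ r₂ ∈ ANN p t ∧
      circ (circ (circPow b (p ^ i)) ((p ^ i : ℕ) • r₁)) ((p ^ i : ℕ) • r₂)
        = (p ^ i : ℕ) • b := by
  classical
  have hm5 : 5 ≤ p ^ i := by
    have h5 : 5 ≤ p := five_le hp hp3
    calc 5 ≤ p := h5
      _ = p ^ 1 := (pow_one p).symm
      _ ≤ p ^ i := Nat.pow_le_pow_right hp.pos hi
  have hterm : ∀ k ∈ Finset.range (p ^ i - 1), ∃ uv : A × A,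
      (p ^ i).choose (k + 2) • eIter b b (k + 1) = (p ^ i : ℕ) • uv.1 + (p ^ i : ℕ) • uv.2
      ∧ uv.1 ∈ ANN p (t + 1) ∧ uv.1 ∈ FF s ∧ uv.2 ∈ ANN p t := by
    intro k hk
    rw [Finset.mem_range] at hk
    have hj1 : 1 ≤ k + 2 := by omega
    have hj2 : k + 2 ≤ p ^ i := by omega
    obtain ⟨hei, hpej, M, hM⟩ := kd hp hj1 hj2
    set e := (k + 2).factorization p with he
    have hFiter : eIter b b (k + 1) ∈ FF s := eIter_mem_FF (by omega) b hb2
    have hAiter : eIter b b (k + 1) ∈ ANN p (t + 1) := eIter_mem_ANN b hb1 (k + 1)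
    rcases Nat.eq_zero_or_pos e with he0 | he1
    · refine ⟨⟨M • eIter b b (k + 1), 0⟩, ?_, ?_, ?_, ?_⟩
      · rw [hM, he0, Nat.sub_zero, mul_nsmul', smul_zero, add_zero]
      · exact AddSubgroup.nsmul_mem _ hAiter _
      · exact AddSubgroup.nsmul_mem _ hFiter _
      · exact AddSubgroup.zero_mem _
    · -- e ≥ 1
      have har : (e + 1) * ((p - 1) / 4) + 1 ≤ p ^ e := ar_pow hp hp3 e he1
      have he1c : (e + 1) * ((p - 1) / 4) ≤ k + 1 := by omega
      have hec : e * ((p - 1) / 4) ≤ k + 1 := by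
        have h3 : e * ((p - 1) / 4) ≤ (e + 1) * ((p - 1) / 4) :=
          Nat.mul_le_mul_right _ (by omega)
        omega
      have hdrop : eIter b b (k + 1) ∈ ANN p (t + 1 - (e + 1)) :=
        iter_ann hP1 (e + 1) he1c b hb1
      by_cases hzero : eIter b b (k + 1) = 0
      · refine ⟨⟨0, 0⟩, ?_, ?_, ?_, ?_⟩
        · simp only [hzero, smul_zero, add_zero]
        · exact AddSubgroup.zero_mem _
        · exact AddSubgroup.zero_mem _
        · exact AddSubgroup.zero_mem _
      · have het : e ≤ t := by
          by_contra hc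
          have h0 : t + 1 - (e + 1) = 0 := by omega
          rw [h0] at hdrop
          exact hzero (mem_ANN_zero_iff.mp hdrop)
        obtain ⟨ρ, hρ⟩ := div_pow hP1 e hec b b
        have hρann : ρ ∈ ANN p t := by
          have h1 : (p ^ e : ℕ) • ρ ∈ ANN p (t + 1 - (e + 1)) := by rw [← hρ]; exact hdrop
          have h2 := ANN_of_smul_mem h1
          have h3 : t + 1 - (e + 1) + e = t := by omega
          rwa [h3] at h2
        refine ⟨⟨0, M • ρ⟩, ?_, ?_, ?_, ?_⟩
        · rw [smul_zero, zero_add]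
          have hpe : p ^ e * p ^ (i - e) = p ^ i := by
            rw [← pow_add]; congr 1; omega
          have hcoef : p ^ (i - e) * M * p ^ e = p ^ i * M := by
            calc p ^ (i - e) * M * p ^ e = p ^ e * p ^ (i - e) * M := by ring
              _ = p ^ i * M := by rw [hpe]
          calc (p ^ i).choose (k + 2) • eIter b b (k + 1)
              = (p ^ (i - e) * M) • ((p ^ e : ℕ) • ρ) := by rw [hM, hρ]
            _ = (p ^ (i - e) * M * p ^ e) • ρ := smul_smul _ _ _
            _ = (p ^ i * M) • ρ := by rw [hcoef]
            _ = (p ^ i : ℕ) • (M • ρ) := (smul_smul _ _ _).symm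
        · exact AddSubgroup.zero_mem _
        · exact AddSubgroup.zero_mem _
        · exact AddSubgroup.nsmul_mem _ hρann _
  choose! UV hUV1 hUV2 hUV3 hUV4 using hterm
  set X1 := ∑ k ∈ Finset.range (p ^ i - 1), (UV k).1 with hX1
  set X2 := ∑ k ∈ Finset.range (p ^ i - 1), (UV k).2 with hX2
  have hX1A : X1 ∈ ANN p (t + 1) := AddSubgroup.sum_mem _ (fun k hk => hUV2 k hk)
  have hX1F : X1 ∈ FF s := AddSubgroup.sum_mem _ (fun k hk => hUV3 k hk)
  have hX2A : X2 ∈ ANN p t := AddSubgroup.sum_mem _ (fun k hk => hUV4 k hk)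
  have hSS : ∑ k ∈ Finset.range (p ^ i - 1), (p ^ i).choose (k + 2) • eIter b b (k + 1)
      = (p ^ i : ℕ) • X1 + (p ^ i : ℕ) • X2 := by
    rw [Finset.sum_congr rfl hUV1, Finset.sum_add_distrib, hX1, hX2,
      Finset.smul_sum, Finset.smul_sum]
  -- the expansion of circPow b (p ^ i)
  have hgsum : circPow b (p ^ i)
      = (∑ k ∈ Finset.range (p ^ i - 1), (p ^ i).choose (k + 2) • eIter b b (k + 1))
      + (p ^ i : ℕ) • b := by
    have h0 := circPow_eq b (p ^ i)
    have hm' : p ^ i = (p ^ i - 1) + 1 := by omega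
    rw [hm', Finset.sum_range_succ'
      (fun k => ((p ^ i - 1) + 1).choose (k + 1) • eIter b b k) (p ^ i - 1), ← hm'] at h0
    rw [h0]
    congr 1
    rw [Nat.choose_one_right]
    rfl
  set g := circPow b (p ^ i) with hg
  set r₁ := lam (cinv g) (-X1) with hr₁
  set r₂ := lam (cinv (circ g ((p ^ i : ℕ) • r₁))) (-X2) with hr₂
  have hw₁ : (p ^ i : ℕ) • r₁ = lam (cinv g) (-((p ^ i : ℕ) • X1)) := by
    rw [hr₁, ← lam_nsmul, smul_neg]
  have hw₂ : (p ^ i : ℕ) • r₂ = lam (cinv (circ g ((p ^ i : ℕ) • r₁))) (-((p ^ i : ℕ) • X2)) := by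
    rw [hr₂, ← lam_nsmul, smul_neg]
  refine ⟨r₁, r₂, ?_, ?_, ?_, ?_⟩
  · exact lam_mem_ANN _ ((ANN p (t+1)).neg_mem hX1A)
  · exact lam_mem_FF _ ((FF s).neg_mem hX1F)
  · exact lam_mem_ANN _ ((ANN p t).neg_mem hX2A)
  · have hc1 : circ g ((p ^ i : ℕ) • r₁) = g - (p ^ i : ℕ) • X1 := by
      rw [hw₁, circ_eq_add_lam, lam_lam_cinv, ← sub_eq_add_neg]
    have hc2 : circ (circ g ((p ^ i : ℕ) • r₁)) ((p ^ i : ℕ) • r₂)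
        = circ g ((p ^ i : ℕ) • r₁) - (p ^ i : ℕ) • X2 := by
      rw [hw₂, circ_eq_add_lam, lam_lam_cinv, ← sub_eq_add_neg]
    rw [hc2, hc1, hgsum, hSS]
    abel

/-- Main double induction, annihilator version. -/
lemma pp (hp : p.Prime) (hp3 : 3 < p) (hP1 : Property1 p A)
    {n : ℕ} (htop : FF (A := A) n = ⊤)
    {i : ℕ} (hi : 1 ≤ i) :
    ∀ t s (b : A), b ∈ ANN p t → b ∈ FF s → ∀ z ∈ ANN p i,
      bstar ((p ^ i : ℕ) • b) z = 0 := by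
  intro t
  induction t with
  | zero =>
      intro s b hb _ z _
      rw [mem_ANN_zero_iff.mp hb, smul_zero, zero_bstar]
  | succ t iht =>
      intro s
      induction s with
      | zero =>
          intro b _ hb z _
          rw [AddSubgroup.mem_bot.mp hb, smul_zero, zero_bstar]
      | succ s ihs =>
          intro b hb1 hb2 z hz
          obtain ⟨r₁, r₂, hr₁A, hr₁F, hr₂A, hdec⟩ := decomp hp hp3 hP1 hi hb1 hb2
          rw [← hdec, bstar_circ]
          have h2 : bstar ((p ^ i : ℕ) • r₂) z = 0 :=
            iht n r₂ hr₂A (htop ▸ AddSubgroup.mem_top r₂) z hz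
          have h1 : bstar ((p ^ i : ℕ) • r₁) z = 0 := ihs r₁ hr₁A hr₁F z hz
          have hgz : bstar (circPow b (p ^ i)) z = 0 := gstar_zero hp hp3 hP1 b hz
          rw [h2, bstar_zero, bstar_circ, h1, bstar_zero, hgz]
          abel

/-- Main double induction, image version. -/
lemma zz (hp : p.Prime) (hp3 : 3 < p) (hP1 : Property1 p A)
    {n : ℕ} (htop : FF (A := A) n = ⊤)
    {i : ℕ} (hi : 1 ≤ i) :
    ∀ t s (b : A), b ∈ ANN p t → b ∈ FF s → ∀ y : A,
      bstar ((p ^ i : ℕ) • b) y ∈ (PAS p i : AddSubgroup A) := by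
  intro t
  induction t with
  | zero =>
      intro s b hb _ y
      rw [mem_ANN_zero_iff.mp hb, smul_zero, zero_bstar]
      exact AddSubgroup.zero_mem _
  | succ t iht =>
      intro s
      induction s with
      | zero =>
          intro b _ hb y
          rw [AddSubgroup.mem_bot.mp hb, smul_zero, zero_bstar]
          exact AddSubgroup.zero_mem _
      | succ s ihs =>
          intro b hb1 hb2 y
          obtain ⟨r₁, r₂, hr₁A, hr₁F, hr₂A, hdec⟩ := decomp hp hp3 hP1 hi hb1 hb2
          rw [← hdec, bstar_circ]
          have hU : ∀ w : A, bstar (circ (circPow b (p ^ i)) ((p ^ i : ℕ) • r₁)) w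
              ∈ (PAS p i : AddSubgroup A) := by
            intro w
            rw [bstar_circ]
            have hw1 : bstar ((p ^ i : ℕ) • r₁) w ∈ (PAS p i : AddSubgroup A) :=
              ihs r₁ hr₁A hr₁F w
            exact AddSubgroup.add_mem _
              (AddSubgroup.add_mem _ (bstar_mem_PAS _ hw1) (gstar_mem hp hp3 hP1 b w)) hw1
          have hw2 : bstar ((p ^ i : ℕ) • r₂) y ∈ (PAS p i : AddSubgroup A) :=
            iht n r₂ hr₂A (htop ▸ AddSubgroup.mem_top r₂) y
          exact AddSubgroup.add_mem _ (AddSubgroup.add_mem _ (hU _) (hU y)) hw2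

end Main

end LeftBrace
theorem statement6 {A : Type*} [LeftBrace A] [Fintype A] (p n : ℕ) (hp : p.Prime)
    (hp3 : 3 < p) (hcard : Fintype.card A = p ^ n) (hP1 : Property1 p A) :
    (∀ i : ℕ, IsIdeal (ann p i : Set A) ∧ IsIdeal (pA p i : Set A)) ∧
    (∀ i j : ℕ, i ≤ j → ∀ x : A, x ∈ pA p i → ∀ y ∈ ann p j,
      bstar x y ∈ ann p (j - i)) := by
  classical
  have hn : ∀ a : A, a ∈ ANN p n := by
    intro a
    rw [mem_ANN, ← hcard]
    exact card_nsmul_eq_zero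
  have htop : FF (A := A) n = ⊤ := FF_top p n hp hcard
  have hmemtop : ∀ b : A, b ∈ FF (A := A) n := by
    intro b
    rw [htop]
    exact AddSubgroup.mem_top b
  have hPP : ∀ i, 1 ≤ i → ∀ x ∈ (pA p i : Set A), ∀ z ∈ (ann p i : Set A), bstar x z = 0 := by
    intro i hi x hx z hz
    obtain ⟨b, hb⟩ := hx
    rw [← hb]
    exact pp hp hp3 hP1 htop hi n n b (hn b) (hmemtop b) z hz
  have hZZ : ∀ i, ∀ x ∈ (pA p i : Set A), ∀ y : A, bstar x y ∈ (pA p i : Set A) := by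
    intro i x hx y
    rcases Nat.eq_zero_or_pos i with h0 | h1
    · subst h0
      exact ⟨bstar x y, by show (p ^ 0 : ℕ) • bstar x y = bstar x y; rw [pow_zero, one_smul]⟩
    · obtain ⟨b, hb⟩ := hx
      rw [← hb]
      exact zz hp hp3 hP1 htop h1 n n b (hn b) (hmemtop b) y
  constructor
  · intro i
    constructor
    · refine ⟨?_, ?_, ?_, ?_, ?_⟩
      · rw [mem_ann_iff]
        exact smul_zero _
      · intro x hx y hy
        rw [mem_ann_iff] at hx hy ⊢
        rw [smul_add, hx, hy, add_zero]
      · intro x hx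
        rw [mem_ann_iff] at hx ⊢
        rw [smul_neg, hx, neg_zero]
      · intro a x hx
        rw [mem_ann_iff] at hx ⊢
        rw [← bstar_nsmul, hx, bstar_zero]
      · intro a x hx
        exact qq hp hp3 hP1 hn hx a
    · refine ⟨?_, ?_, ?_, ?_, ?_⟩
      · exact ⟨0, smul_zero _⟩
      · rintro x ⟨bx, hbx⟩ y ⟨by', hby⟩
        have hbx' : (p ^ i : ℕ) • bx = x := hbx
        have hby' : (p ^ i : ℕ) • by' = y := hby
        exact ⟨bx + by', by show (p ^ i : ℕ) • (bx + by') = x + y; rw [smul_add, hbx', hby']⟩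
      · rintro x ⟨bx, hbx⟩
        have hbx' : (p ^ i : ℕ) • bx = x := hbx
        exact ⟨-bx, by show (p ^ i : ℕ) • (-bx) = -x; rw [smul_neg, hbx']⟩
      · rintro a x ⟨bx, hbx⟩
        have hbx' : (p ^ i : ℕ) • bx = x := hbx
        refine ⟨bstar a bx, ?_⟩
        show (p ^ i : ℕ) • bstar a bx = bstar a x
        rw [← bstar_nsmul]
        exact congrArg (bstar a) hbx'
      · intro a x hx
        exact hZZ i x hx a
  · intro i j hij x hx y hy
    rw [mem_ann_iff]
    rw [← bstar_nsmul]
    rcases Nat.eq_zero_or_pos i with h0 | h1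
    · subst h0
      have hy0 : (p ^ (j - 0) : ℕ) • y = 0 := by
        rw [Nat.sub_zero]
        exact hy
      rw [hy0, bstar_zero]
    · have hyz : (p ^ (j - i) : ℕ) • y ∈ (ann p i : Set A) := by
        rw [mem_ann_iff, smul_smul, ← pow_add]
        rw [show i + (j - i) = j by omega]
        exact hy
      exact hPP i h1 x hx _ hyz
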